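/- (Exponential stability of the ORFD model, uniform in h.) Let k₁, k₂ > 0 and let δ > 0 satisfy δ < (1/(2L)) · min( 1/η, 2k₁α₁/(α₁ρ + k₁²), 4k₂βα₁/(2α₁βμ + (α + γ²β)k₂²) ). Then along every solution of the semi-discrete ORFD system, the discrete energy satisfies E_h(t) ≤ ((1 + δLη)/(1 − δLη)) · e^{−δ(1 − δLη) t} · E_h(0) for all t ≥ 0. -/

import Mathlib

/-!
The energy identity gives `E_h' = -(k₁ |w¹_{N+1}|² + k₂ |w²_{N+1}|²)`: the feedback only
dissipates at `x = L`. To get decay, perturb the energy by the discrete multiplier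
`F_h ≈ ∫₀ᴸ x (ρ w¹ u¹ + μ w² u²) dx`. Summation by parts gives
`F_h' = L e_{N+1} - h ∑ⱼ (eⱼ + e_{j+1})/2 ≤ L e_{N+1} - E_h`, where `eⱼ` is the nodal energy
density, and the smallness of `δ` lets the boundary feedback absorb `δ L e_{N+1}`. So
`V = E_h + δ F_h` satisfies `V' ≤ -δ E_h`. AM-GM with the group speed `η` gives
`|F_h| ≤ L η E_h`, hence `(1 - δLη) E_h ≤ V ≤ (1 + δLη) E_h`, and Grönwall's argument for `V`
gives the bound, with constants independent of `h`.
-/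

noncomputable section

/-- Midpoint average `U_{j+1/2} = (U_j + U_{j+1})/2` of a grid function. -/
def gridMid (U : ℕ → ℝ) (j : ℕ) : ℝ := (U j + U (j + 1)) / 2

/-- Difference quotient `δ_x U_{j+1/2} = (U_{j+1} − U_j)/h` of a grid function. -/
def gridDx (h : ℝ) (U : ℕ → ℝ) (j : ℕ) : ℝ := (U (j + 1) - U j) / h

def discEnergy (ρ μ β γ α₁ h : ℝ) (N : ℕ) (u1 u2 w1 w2 : ℕ → ℝ) : ℝ :=
  h / 2 * ∑ j ∈ Finset.range (N + 1),
    (ρ * gridMid w1 j ^ 2 + μ * gridMid w2 j ^ 2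
      + β * (γ * gridMid u1 j - gridMid u2 j) ^ 2 + α₁ * gridMid u1 j ^ 2)

open Real Finset

theorem le_exp_mul_of_hasDerivAt_le {V : ℝ → ℝ} {c : ℝ}
    (hV : ∀ s ≥ 0, ∃ D, HasDerivAt V D s ∧ D ≤ -c * V s) {t : ℝ} (ht : 0 ≤ t) :
    V t ≤ exp (-c * t) * V 0 := by
  choose! D hD hDle using hV
  have hG : ∀ s ≥ 0, HasDerivAt (fun s => exp (c * s) * V s)
      (exp (c * s) * (D s + c * V s)) s := fun s hs =>
    (((hasDerivAt_id' s).const_mul c).exp.fun_mul (hD s hs)).congr_deriv (by ring)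
  have anti : AntitoneOn (fun s => exp (c * s) * V s) (Set.Ici 0) :=
    antitoneOn_of_hasDerivWithinAt_nonpos (convex_Ici 0)
      (fun s hs => (hG s hs).continuousAt.continuousWithinAt)
      (fun s hs => (hG s (interior_subset hs)).hasDerivWithinAt)
      (fun s hs => mul_nonpos_of_nonneg_of_nonpos (exp_pos _).le
        (by linarith [hDle s (interior_subset hs)]))
  have hGt : exp (c * t) * V t ≤ V 0 := by
    simpa using anti Set.self_mem_Ici ht ht
  calc V t = exp (-c * t) * (exp (c * t) * V t) := by
        rw [← mul_assoc, ← exp_add, neg_mul, neg_add_cancel, exp_zero, one_mul]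
    _ ≤ exp (-c * t) * V 0 := mul_le_mul_of_nonneg_left hGt (exp_pos _).le

theorem le_exp_decay_of_lyapunov {E F : ℝ → ℝ} {δ K : ℝ} (hδ : 0 ≤ δ) (hK : 0 ≤ K)
    (hδK : δ * K < 1) (hE₀ : 0 ≤ E 0) (hF : ∀ s ≥ 0, |F s| ≤ K * E s)
    (hV : ∀ s ≥ 0, ∃ D, HasDerivAt (fun s => E s + δ * F s) D s ∧ D ≤ -δ * E s)
    {t : ℝ} (ht : 0 ≤ t) :
    E t ≤ (1 + δ * K) / (1 - δ * K) * exp (-δ * (1 - δ * K) * t) * E 0 := by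
  set x := δ * K
  have hx : 0 ≤ x := mul_nonneg hδ hK
  have hV_le : ∀ s ≥ 0, E s + δ * F s ≤ (1 + x) * E s := fun s hs => by
    nlinarith [(abs_le.mp (hF s hs)).2]
  have hV_ge : ∀ s ≥ 0, (1 - x) * E s ≤ E s + δ * F s := fun s hs => by
    nlinarith [(abs_le.mp (hF s hs)).1]
  -- `V ≤ (1 + x) E` turns `V' ≤ -δ E` into `V' ≤ -(δ / (1 + x)) V`.
  have hdecay := le_exp_mul_of_hasDerivAt_le (c := δ / (1 + x)) (fun s hs => by
    obtain ⟨D, hD, hDle⟩ := hV s hs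
    refine ⟨D, hD, hDle.trans ?_⟩
    rw [neg_mul, neg_mul, neg_le_neg_iff, div_mul_eq_mul_div, div_le_iff₀ (by positivity)]
    nlinarith [hV_le s hs]) ht
  have hrate : exp (-(δ / (1 + x)) * t) ≤ exp (-δ * (1 - x) * t) := by
    gcongr
    rw [neg_mul, neg_le_neg_iff, le_div_iff₀ (by positivity)]
    nlinarith [mul_nonneg hδ (sq_nonneg x)]
  rw [div_mul_eq_mul_div, div_mul_eq_mul_div, le_div_iff₀ (by linarith)]
  calc E t * (1 - x) ≤ exp (-(δ / (1 + x)) * t) * (E 0 + δ * F 0) := by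
        linarith [hV_ge t ht]
    _ ≤ exp (-(δ / (1 + x)) * t) * ((1 + x) * E 0) :=
        mul_le_mul_of_nonneg_left (hV_le 0 le_rfl) (exp_pos _).le
    _ ≤ exp (-δ * (1 - x) * t) * ((1 + x) * E 0) := by gcongr
    _ = (1 + x) * exp (-δ * (1 - x) * t) * E 0 := by ring

theorem mul_mul_le_of_sq_le {a b c k : ℝ} (ha : 0 ≤ a) (hb : 0 ≤ b) (hk : 0 ≤ k)
    (hc : c ^ 2 ≤ k ^ 2 * (a * b)) (x y : ℝ) :
    c * x * y ≤ k / 2 * (a * x ^ 2 + b * y ^ 2) := by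
  have hc' : |c| ≤ k * (√a * √b) := by
    rw [← sqrt_mul ha, ← sqrt_sq hk, ← sqrt_mul (sq_nonneg k)]
    exact abs_le_sqrt hc
  have hxy := two_mul_le_add_sq (√a * |x|) (√b * |y|)
  rw [mul_pow, mul_pow, sq_sqrt ha, sq_sqrt hb, sq_abs, sq_abs] at hxy
  calc c * x * y ≤ |c| * (|x| * |y|) := by
        rw [mul_assoc, ← abs_mul]; exact (le_abs_self _).trans (abs_mul _ _).le
    _ ≤ k * (√a * √b) * (|x| * |y|) := by gcongr
    _ ≤ k / 2 * (a * x ^ 2 + b * y ^ 2) := by nlinarith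

theorem abs_mul_add_mul_le {ρ μ β γ α₁ η : ℝ} (hρ : 0 ≤ ρ) (hμ : 0 ≤ μ) (hβ : 0 < β)
    (hα₁ : 0 < α₁) (hη₁ : √(ρ / α₁) + √(μ * γ ^ 2 / α₁) ≤ η)
    (hη₂ : √(μ / β) + √(μ * γ ^ 2 / α₁) ≤ η) (W1 W2 U1 U2 : ℝ) :
    |ρ * W1 * U1 + μ * W2 * U2| ≤
      η / 2 * (ρ * W1 ^ 2 + μ * W2 ^ 2 + β * (γ * U1 - U2) ^ 2 + α₁ * U1 ^ 2) := by
  set p := √(ρ / α₁)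
  set q := √(μ * γ ^ 2 / α₁)
  set r := √(μ / β)
  have hp : 0 ≤ p := sqrt_nonneg _
  have hq : 0 ≤ q := sqrt_nonneg _
  have hr : 0 ≤ r := sqrt_nonneg _
  have hp2 : p ^ 2 = ρ / α₁ := sq_sqrt (by positivity)
  have hq2 : q ^ 2 = μ * γ ^ 2 / α₁ := sq_sqrt (by positivity)
  have hr2 : r ^ 2 = μ / β := sq_sqrt (by positivity)
  -- Split `μ W₂ U₂ = μγ W₂ U₁ - μ W₂ (γ U₁ - U₂)` and apply AM-GM to each product.
  have one_sided : ∀ W1 W2 : ℝ, ρ * W1 * U1 + μ * W2 * U2 ≤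
      η / 2 * (ρ * W1 ^ 2 + μ * W2 ^ 2 + β * (γ * U1 - U2) ^ 2 + α₁ * U1 ^ 2) := by
    intro W1 W2
    have h1 := mul_mul_le_of_sq_le hρ hα₁.le hp (c := ρ)
      (by rw [hp2]; apply le_of_eq; field_simp) W1 U1
    have h2 := mul_mul_le_of_sq_le hμ hα₁.le hq (c := μ * γ)
      (by rw [hq2]; apply le_of_eq; field_simp) W2 U1
    have h3 := mul_mul_le_of_sq_le hμ hβ.le hr (c := -μ)
      (by rw [hr2]; apply le_of_eq; field_simp) W2 (γ * U1 - U2)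
    have hpη : p ≤ η := by linarith
    have hqrη : q + r ≤ η := by linarith
    have hrη : r ≤ η := by linarith
    linarith [mul_le_mul_of_nonneg_right hpη (by positivity : 0 ≤ ρ * W1 ^ 2),
      mul_le_mul_of_nonneg_right hqrη (by positivity : 0 ≤ μ * W2 ^ 2),
      mul_le_mul_of_nonneg_right hrη (by positivity : 0 ≤ β * (γ * U1 - U2) ^ 2),
      mul_le_mul_of_nonneg_right hη₁ (by positivity : 0 ≤ α₁ * U1 ^ 2)]
  refine abs_le.mpr ⟨?_, one_sided W1 W2⟩
  linarith [one_sided (-W1) (-W2)]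

def nodalEnergy (ρ μ β γ α₁ : ℝ) (u1 u2 w1 w2 : ℕ → ℝ) (j : ℕ) : ℝ :=
  (ρ * w1 j ^ 2 + μ * w2 j ^ 2 + β * (γ * u1 j - u2 j) ^ 2 + α₁ * u1 j ^ 2) / 2

def nodalFlux (α β γ : ℝ) (u1 u2 w1 w2 : ℕ → ℝ) (j : ℕ) : ℝ :=
  w1 j * (α * u1 j - γ * β * u2 j) + w2 j * (β * u2 j - γ * β * u1 j)

/-- The discrete counterpart of the multiplier `∫₀ᴸ x (ρ w¹ u¹ + μ w² u²) dx`, with the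
weight `x` sampled at the cell midpoints `(j + 1/2) h`. -/
def discMultiplier (ρ μ h : ℝ) (N : ℕ) (u1 u2 w1 w2 : ℕ → ℝ) : ℝ :=
  h * ∑ j ∈ range (N + 1), ((j : ℝ) + 1 / 2) * h *
    (ρ * gridMid w1 j * gridMid u1 j + μ * gridMid w2 j * gridMid u2 j)

structure IsORFDSolutionAt (ρ μ α β γ h : ℝ) (N : ℕ) (u1 u2 w1 w2 : ℝ → ℕ → ℝ) (t : ℝ) :
    Prop where
  hasDerivAt_u1 : ∀ j ≤ N, HasDerivAt (fun s => gridMid (u1 s) j) (gridDx h (w1 t) j) t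
  hasDerivAt_u2 : ∀ j ≤ N, HasDerivAt (fun s => gridMid (u2 s) j) (gridDx h (w2 t) j) t
  hasDerivAt_w1 : ∀ j ≤ N, HasDerivAt (fun s => gridMid (w1 s) j)
    ((α * gridDx h (u1 t) j - γ * β * gridDx h (u2 t) j) / ρ) t
  hasDerivAt_w2 : ∀ j ≤ N, HasDerivAt (fun s => gridMid (w2 s) j)
    ((β * gridDx h (u2 t) j - γ * β * gridDx h (u1 t) j) / μ) t

section Grid

variable {ρ μ α β γ α₁ h : ℝ} {N : ℕ}

theorem discEnergy_nonneg (hρ : 0 ≤ ρ) (hμ : 0 ≤ μ) (hβ : 0 ≤ β) (hα₁ : 0 ≤ α₁) (hh : 0 ≤ h)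
    (u1 u2 w1 w2 : ℕ → ℝ) : 0 ≤ discEnergy ρ μ β γ α₁ h N u1 u2 w1 w2 :=
  mul_nonneg (by positivity) (sum_nonneg fun j _ => by positivity)

theorem discEnergy_le_sum_nodalEnergy (hρ : 0 ≤ ρ) (hμ : 0 ≤ μ) (hβ : 0 ≤ β) (hα₁ : 0 ≤ α₁)
    (hh : 0 ≤ h) (u1 u2 w1 w2 : ℕ → ℝ) :
    discEnergy ρ μ β γ α₁ h N u1 u2 w1 w2 ≤
      h * ∑ j ∈ range (N + 1),
        (nodalEnergy ρ μ β γ α₁ u1 u2 w1 w2 j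
          + nodalEnergy ρ μ β γ α₁ u1 u2 w1 w2 (j + 1)) / 2 := by
  have mid_sq : ∀ U : ℕ → ℝ, ∀ j, gridMid U j ^ 2 ≤ (U j ^ 2 + U (j + 1) ^ 2) / 2 :=
    fun U j => by rw [gridMid]; nlinarith [sq_nonneg (U j - U (j + 1))]
  have cell : ∀ j, ρ * gridMid w1 j ^ 2 + μ * gridMid w2 j ^ 2
      + β * (γ * gridMid u1 j - gridMid u2 j) ^ 2 + α₁ * gridMid u1 j ^ 2 ≤
      nodalEnergy ρ μ β γ α₁ u1 u2 w1 w2 j + nodalEnergy ρ μ β γ α₁ u1 u2 w1 w2 (j + 1) := by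
    intro j
    have hmid : γ * gridMid u1 j - gridMid u2 j = gridMid (fun i => γ * u1 i - u2 i) j := by
      simp only [gridMid]; ring
    rw [hmid, nodalEnergy, nodalEnergy]
    linarith [mul_le_mul_of_nonneg_left (mid_sq w1 j) hρ,
      mul_le_mul_of_nonneg_left (mid_sq w2 j) hμ,
      mul_le_mul_of_nonneg_left (mid_sq (fun i => γ * u1 i - u2 i) j) hβ,
      mul_le_mul_of_nonneg_left (mid_sq u1 j) hα₁]
  rw [discEnergy, mul_sum, mul_sum]
  exact sum_le_sum fun j _ => by linarith [mul_le_mul_of_nonneg_left (cell j) hh]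

theorem abs_discMultiplier_le {η L : ℝ} (hρ : 0 ≤ ρ) (hμ : 0 ≤ μ) (hβ : 0 < β) (hα₁ : 0 < α₁)
    (hη₁ : √(ρ / α₁) + √(μ * γ ^ 2 / α₁) ≤ η) (hη₂ : √(μ / β) + √(μ * γ ^ 2 / α₁) ≤ η)
    (hh : 0 ≤ h) (hNh : (N + 1) * h = L) (u1 u2 w1 w2 : ℕ → ℝ) :
    |discMultiplier ρ μ h N u1 u2 w1 w2| ≤ L * η * discEnergy ρ μ β γ α₁ h N u1 u2 w1 w2 := by
  have hL : 0 ≤ L := hNh ▸ by positivity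
  have cell : ∀ j ∈ range (N + 1),
      |((j : ℝ) + 1 / 2) * h *
          (ρ * gridMid w1 j * gridMid u1 j + μ * gridMid w2 j * gridMid u2 j)| ≤
        L * (η / 2 * (ρ * gridMid w1 j ^ 2 + μ * gridMid w2 j ^ 2
          + β * (γ * gridMid u1 j - gridMid u2 j) ^ 2 + α₁ * gridMid u1 j ^ 2)) := by
    intro j hj
    have hjN : (j : ℝ) + 1 / 2 ≤ N + 1 := by
      have : (j : ℝ) ≤ N := by exact_mod_cast Nat.lt_succ_iff.mp (mem_range.mp hj)
      linarith
    rw [abs_mul, abs_of_nonneg (by positivity)]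
    exact mul_le_mul (hNh ▸ mul_le_mul_of_nonneg_right hjN hh)
      (abs_mul_add_mul_le hρ hμ hβ hα₁ hη₁ hη₂ _ _ _ _) (abs_nonneg _) hL
  rw [discMultiplier, abs_mul, abs_of_nonneg hh]
  calc h * |∑ j ∈ range (N + 1), ((j : ℝ) + 1 / 2) * h *
        (ρ * gridMid w1 j * gridMid u1 j + μ * gridMid w2 j * gridMid u2 j)|
      ≤ h * ∑ j ∈ range (N + 1), L * (η / 2 * (ρ * gridMid w1 j ^ 2 + μ * gridMid w2 j ^ 2
          + β * (γ * gridMid u1 j - gridMid u2 j) ^ 2 + α₁ * gridMid u1 j ^ 2)) := by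
        gcongr
        exact (abs_sum_le_sum_abs _ _).trans (sum_le_sum cell)
    _ = L * η * discEnergy ρ μ β γ α₁ h N u1 u2 w1 w2 := by
        rw [discEnergy, ← mul_sum, ← mul_sum]; ring

theorem nodalEnergy_le_of_feedback {k₁ k₂ d : ℝ} (hρ : 0 ≤ ρ) (hμ : 0 ≤ μ) (hβ : 0 < β)
    (hα₁ : 0 < α₁) (hα₁def : α₁ = α - γ ^ 2 * β) (hd : 0 ≤ d)
    (hd₁ : d * (α₁ * ρ + k₁ ^ 2) ≤ k₁ * α₁)
    (hd₂ : d * (2 * α₁ * β * μ + (α + γ ^ 2 * β) * k₂ ^ 2) ≤ 2 * k₂ * β * α₁)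
    {u1 u2 w1 w2 : ℕ → ℝ} {n : ℕ}
    (hb1 : α * u1 n - γ * β * u2 n = -(k₁ * w1 n))
    (hb2 : β * u2 n - γ * β * u1 n = -(k₂ * w2 n)) :
    d * nodalEnergy ρ μ β γ α₁ u1 u2 w1 w2 n ≤ k₁ * w1 n ^ 2 + k₂ * w2 n ^ 2 := by
  subst hα₁def
  set X := w1 n
  set Y := w2 n
  set P := u1 n
  set Q := u2 n
  -- The feedback law reads `M (P, Q) = -(k₁ X, k₂ Y)` with `M = [[α, -γβ], [-γβ, β]]`, and the
  -- strain part of `2 e` is `(P, Q)ᵀ M (P, Q)`, a quadratic form in the velocities `(X, Y)`.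
  have hP : (α - γ ^ 2 * β) * P = -(k₁ * X + γ * k₂ * Y) := by
    linear_combination hb1 + γ * hb2
  have hQ : β * (α - γ ^ 2 * β) * Q = -(γ * β * k₁ * X + α * k₂ * Y) := by
    linear_combination γ * β * hb1 + α * hb2
  have h2e : β * (α - γ ^ 2 * β) * (2 * nodalEnergy ρ μ β γ (α - γ ^ 2 * β) u1 u2 w1 w2 n) =
      β * (α - γ ^ 2 * β) * (ρ * X ^ 2 + μ * Y ^ 2) + β * k₁ ^ 2 * X ^ 2
        + 2 * γ * β * k₁ * k₂ * X * Y + α * k₂ ^ 2 * Y ^ 2 := by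
    rw [nodalEnergy]
    linear_combination β * (α - γ ^ 2 * β) * (P * hb1 + Q * hb2)
      - β * k₁ * X * hP - k₂ * Y * hQ
  have hβα₁ : 0 < β * (α - γ ^ 2 * β) := mul_pos hβ hα₁
  refine le_of_mul_le_mul_left ?_ (mul_pos two_pos hβα₁)
  nlinarith [mul_nonneg (mul_nonneg hd hβ.le) (sq_nonneg (k₁ * X - γ * k₂ * Y)),
    mul_nonneg (mul_nonneg hd hβα₁.le) (mul_nonneg hρ (sq_nonneg X)),
    mul_nonneg (mul_nonneg hd hβα₁.le) (mul_nonneg hμ (sq_nonneg Y)),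
    mul_le_mul_of_nonneg_right hd₁ (mul_nonneg hβ.le (sq_nonneg X)),
    mul_le_mul_of_nonneg_right hd₂ (sq_nonneg Y)]

end Grid

namespace IsORFDSolutionAt

variable {ρ μ α β γ α₁ h : ℝ} {N : ℕ} {u1 u2 w1 w2 : ℝ → ℕ → ℝ} {t : ℝ}

theorem hasDerivAt_discEnergy (hsol : IsORFDSolutionAt ρ μ α β γ h N u1 u2 w1 w2 t)
    (hρ : ρ ≠ 0) (hμ : μ ≠ 0) (hh : h ≠ 0) (hα₁def : α₁ = α - γ ^ 2 * β) :
    HasDerivAt (fun s => discEnergy ρ μ β γ α₁ h N (u1 s) (u2 s) (w1 s) (w2 s))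
      (nodalFlux α β γ (u1 t) (u2 t) (w1 t) (w2 t) (N + 1)
        - nodalFlux α β γ (u1 t) (u2 t) (w1 t) (w2 t) 0) t := by
  set φ := nodalFlux α β γ (u1 t) (u2 t) (w1 t) (w2 t)
  have cell : ∀ j ∈ range (N + 1),
      HasDerivAt (fun s => ρ * gridMid (w1 s) j ^ 2 + μ * gridMid (w2 s) j ^ 2
        + β * (γ * gridMid (u1 s) j - gridMid (u2 s) j) ^ 2 + α₁ * gridMid (u1 s) j ^ 2)
      (2 / h * (φ (j + 1) - φ j)) t := by
    intro j hj
    have hj : j ≤ N := Nat.lt_succ_iff.mp (mem_range.mp hj)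
    have hu1 := hsol.hasDerivAt_u1 j hj
    refine (((((hsol.hasDerivAt_w1 j hj).fun_pow 2).const_mul ρ).fun_add
      (((hsol.hasDerivAt_w2 j hj).fun_pow 2).const_mul μ)).fun_add
      ((((hu1.const_mul γ).fun_sub (hsol.hasDerivAt_u2 j hj)).fun_pow 2).const_mul β)).fun_add
      ((hu1.fun_pow 2).const_mul α₁) |>.congr_deriv ?_
    simp only [φ, nodalFlux, gridMid, gridDx, hα₁def]
    field_simp
    ring
  have hsum : HasDerivAt (fun s => discEnergy ρ μ β γ α₁ h N (u1 s) (u2 s) (w1 s) (w2 s))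
      (h / 2 * ∑ j ∈ range (N + 1), 2 / h * (φ (j + 1) - φ j)) t :=
    (HasDerivAt.fun_sum cell).const_mul (h / 2)
  refine hsum.congr_deriv ?_
  rw [← mul_sum, sum_range_sub]
  field_simp

theorem hasDerivAt_discMultiplier (hsol : IsORFDSolutionAt ρ μ α β γ h N u1 u2 w1 w2 t)
    (hρ : ρ ≠ 0) (hμ : μ ≠ 0) (hh : h ≠ 0) (hα₁def : α₁ = α - γ ^ 2 * β) :
    HasDerivAt (fun s => discMultiplier ρ μ h N (u1 s) (u2 s) (w1 s) (w2 s))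
      ((N + 1) * h * nodalEnergy ρ μ β γ α₁ (u1 t) (u2 t) (w1 t) (w2 t) (N + 1)
        - h * ∑ j ∈ range (N + 1), (nodalEnergy ρ μ β γ α₁ (u1 t) (u2 t) (w1 t) (w2 t) j
          + nodalEnergy ρ μ β γ α₁ (u1 t) (u2 t) (w1 t) (w2 t) (j + 1)) / 2) t := by
  set e := nodalEnergy ρ μ β γ α₁ (u1 t) (u2 t) (w1 t) (w2 t)
  have cell : ∀ j ∈ range (N + 1),
      HasDerivAt (fun s => ((j : ℝ) + 1 / 2) * h *
        (ρ * gridMid (w1 s) j * gridMid (u1 s) j + μ * gridMid (w2 s) j * gridMid (u2 s) j))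
      (((j : ℝ) + 1 / 2) * (e (j + 1) - e j)) t := by
    intro j hj
    have hj : j ≤ N := Nat.lt_succ_iff.mp (mem_range.mp hj)
    refine (((((hsol.hasDerivAt_w1 j hj).const_mul ρ).fun_mul (hsol.hasDerivAt_u1 j hj)).fun_add
      (((hsol.hasDerivAt_w2 j hj).const_mul μ).fun_mul (hsol.hasDerivAt_u2 j hj))).const_mul
      (((j : ℝ) + 1 / 2) * h)).congr_deriv ?_
    simp only [e, nodalEnergy, gridMid, gridDx, hα₁def]
    field_simp
    ring
  have hsum : HasDerivAt (fun s => discMultiplier ρ μ h N (u1 s) (u2 s) (w1 s) (w2 s))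
      (h * ∑ j ∈ range (N + 1), ((j : ℝ) + 1 / 2) * (e (j + 1) - e j)) t :=
    (HasDerivAt.fun_sum cell).const_mul h
  refine hsum.congr_deriv ?_
  have hparts : ∀ j ∈ range (N + 1), ((j : ℝ) + 1 / 2) * (e (j + 1) - e j) =
      (((j + 1 : ℕ) : ℝ) * e (j + 1) - (j : ℝ) * e j) - (e j + e (j + 1)) / 2 := fun j _ => by
    push_cast; ring
  rw [sum_congr rfl hparts, sum_sub_distrib, sum_range_sub (fun j => (j : ℝ) * e j)]
  push_cast
  ring

theorem exists_hasDerivAt_lyapunov_le {k₁ k₂ δ L : ℝ}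
    (hsol : IsORFDSolutionAt ρ μ α β γ h N u1 u2 w1 w2 t) (hρ : 0 < ρ) (hμ : 0 < μ)
    (hβ : 0 < β) (hα₁ : 0 < α₁) (hα₁def : α₁ = α - γ ^ 2 * β) (hh : 0 < h)
    (hNh : (N + 1) * h = L) (hδ : 0 ≤ δ)
    (hd₁ : δ * L * (α₁ * ρ + k₁ ^ 2) ≤ k₁ * α₁)
    (hd₂ : δ * L * (2 * α₁ * β * μ + (α + γ ^ 2 * β) * k₂ ^ 2) ≤ 2 * k₂ * β * α₁)
    (hb0 : w1 t 0 = 0 ∧ w2 t 0 = 0)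
    (hbL1 : α * u1 t (N + 1) - γ * β * u2 t (N + 1) = -(k₁ * w1 t (N + 1)))
    (hbL2 : β * u2 t (N + 1) - γ * β * u1 t (N + 1) = -(k₂ * w2 t (N + 1))) :
    ∃ D, HasDerivAt (fun s => discEnergy ρ μ β γ α₁ h N (u1 s) (u2 s) (w1 s) (w2 s)
        + δ * discMultiplier ρ μ h N (u1 s) (u2 s) (w1 s) (w2 s)) D t ∧
      D ≤ -δ * discEnergy ρ μ β γ α₁ h N (u1 t) (u2 t) (w1 t) (w2 t) := by
  refine ⟨_, (hsol.hasDerivAt_discEnergy hρ.ne' hμ.ne' hh.ne' hα₁def).add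
    ((hsol.hasDerivAt_discMultiplier hρ.ne' hμ.ne' hh.ne' hα₁def).const_mul δ), ?_⟩
  have hflux0 : nodalFlux α β γ (u1 t) (u2 t) (w1 t) (w2 t) 0 = 0 := by
    simp [nodalFlux, hb0.1, hb0.2]
  have hfluxL : nodalFlux α β γ (u1 t) (u2 t) (w1 t) (w2 t) (N + 1) =
      -(k₁ * w1 t (N + 1) ^ 2 + k₂ * w2 t (N + 1) ^ 2) := by
    rw [nodalFlux, hbL1, hbL2]; ring
  have hL : 0 ≤ L := hNh ▸ by positivity
  have hbdry := nodalEnergy_le_of_feedback hρ.le hμ.le hβ hα₁ hα₁def (by positivity) hd₁ hd₂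
    hbL1 hbL2
  have htrap := discEnergy_le_sum_nodalEnergy (γ := γ) (N := N) hρ.le hμ.le hβ.le hα₁.le hh.le
    (u1 t) (u2 t) (w1 t) (w2 t)
  rw [hflux0, hfluxL, hNh]
  nlinarith [mul_le_mul_of_nonneg_left htrap hδ]

end IsORFDSolutionAt

theorem stmt_11_general (ρ μ α β γ α₁ η k₁ k₂ δ : ℝ)
    (hρ : 0 < ρ) (hμ : 0 < μ) (hα : 0 < α) (hβ : 0 < β)
    (hα₁def : α₁ = α - γ ^ 2 * β) (hα₁ : 0 < α₁)
    (hη : η = max (Real.sqrt (ρ / α₁) + Real.sqrt (μ * γ ^ 2 / α₁))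
      (Real.sqrt (μ / β) + Real.sqrt (μ * γ ^ 2 / α₁)))
    (N : ℕ) (L h : ℝ) (hL : 0 < L) (hh : h = L / (N + 1))
    (hδpos : 0 < δ)
    (hδ : δ < 1 / (2 * L) * min (min (1 / η) (2 * k₁ * α₁ / (α₁ * ρ + k₁ ^ 2)))
      (4 * k₂ * β * α₁ / (2 * α₁ * β * μ + (α + γ ^ 2 * β) * k₂ ^ 2)))
    (u1 u2 w1 w2 : ℝ → ℕ → ℝ)
    (hode1 : ∀ t ≥ (0 : ℝ), ∀ j ≤ N,
      HasDerivAt (fun s => gridMid (u1 s) j) (gridDx h (w1 t) j) t)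
    (hode2 : ∀ t ≥ (0 : ℝ), ∀ j ≤ N,
      HasDerivAt (fun s => gridMid (u2 s) j) (gridDx h (w2 t) j) t)
    (hode3 : ∀ t ≥ (0 : ℝ), ∀ j ≤ N,
      HasDerivAt (fun s => gridMid (w1 s) j)
        ((α * gridDx h (u1 t) j - γ * β * gridDx h (u2 t) j) / ρ) t)
    (hode4 : ∀ t ≥ (0 : ℝ), ∀ j ≤ N,
      HasDerivAt (fun s => gridMid (w2 s) j)
        ((β * gridDx h (u2 t) j - γ * β * gridDx h (u1 t) j) / μ) t)
    (hbc0 : ∀ t ≥ (0 : ℝ), w1 t 0 = 0 ∧ w2 t 0 = 0)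
    (hbcL1 : ∀ t ≥ (0 : ℝ),
      α * u1 t (N + 1) - γ * β * u2 t (N + 1) = -(k₁ * w1 t (N + 1)))
    (hbcL2 : ∀ t ≥ (0 : ℝ),
      β * u2 t (N + 1) - γ * β * u1 t (N + 1) = -(k₂ * w2 t (N + 1))) :
    ∀ t ≥ (0 : ℝ),
      discEnergy ρ μ β γ α₁ h N (u1 t) (u2 t) (w1 t) (w2 t) ≤
        (1 + δ * L * η) / (1 - δ * L * η) * Real.exp (-δ * (1 - δ * L * η) * t) *
          discEnergy ρ μ β γ α₁ h N (u1 0) (u2 0) (w1 0) (w2 0) := by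
  have hh₀ : 0 < h := hh ▸ by positivity
  have hNh : (N + 1) * h = L := by rw [hh]; field_simp
  have hη₁ : √(ρ / α₁) + √(μ * γ ^ 2 / α₁) ≤ η := hη ▸ le_max_left _ _
  have hη₂ : √(μ / β) + √(μ * γ ^ 2 / α₁) ≤ η := hη ▸ le_max_right _ _
  have hη₀ : 0 < η := lt_of_lt_of_le (by positivity) hη₁
  rw [one_div_mul_eq_div, lt_div_iff₀ (by positivity), lt_min_iff, lt_min_iff,
    lt_div_iff₀ hη₀, lt_div_iff₀ (by positivity), lt_div_iff₀ (by positivity)] at hδ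
  obtain ⟨⟨hδη, hδ₁⟩, hδ₂⟩ := hδ
  intro t ht
  have decay := le_exp_decay_of_lyapunov
    (E := fun s => discEnergy ρ μ β γ α₁ h N (u1 s) (u2 s) (w1 s) (w2 s))
    (F := fun s => discMultiplier ρ μ h N (u1 s) (u2 s) (w1 s) (w2 s)) hδpos.le
    (by positivity : 0 ≤ L * η) (by linarith)
    (discEnergy_nonneg hρ.le hμ.le hβ.le hα₁.le hh₀.le _ _ _ _)
    (fun s _ => abs_discMultiplier_le hρ.le hμ.le hβ hα₁ hη₁ hη₂ hh₀.le hNh _ _ _ _)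
    (fun s hs => IsORFDSolutionAt.exists_hasDerivAt_lyapunov_le
      ⟨hode1 s hs, hode2 s hs, hode3 s hs, hode4 s hs⟩ hρ hμ hβ hα₁ hα₁def hh₀ hNh hδpos.le
      (by linarith) (by linarith) (hbc0 s hs) (hbcL1 s hs) (hbcL2 s hs)) ht
  simpa only [mul_assoc] using decay

/-- Exponential stability of the ORFD model, uniform in `h`: if
`0 < δ < (1/(2L))·min(1/η, 2k₁α₁/(α₁ρ + k₁²), 4k₂βα₁/(2α₁βμ + (α+γ²β)k₂²))`, then along
every solution of the semi-discrete ORFD system,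
`E_h(t) ≤ ((1+δLη)/(1−δLη)) e^{−δ(1−δLη)t} E_h(0)` for all `t ≥ 0`. -/
theorem stmt_11 (ρ μ α β γ α₁ η k₁ k₂ δ : ℝ)
    (hρ : 0 < ρ) (hμ : 0 < μ) (hα : 0 < α) (hβ : 0 < β) (hγ : 0 < γ)
    (hk₁ : 0 < k₁) (hk₂ : 0 < k₂)
    (hα₁def : α₁ = α - γ ^ 2 * β) (hα₁ : 0 < α₁)
    (hη : η = max (Real.sqrt (ρ / α₁) + Real.sqrt (μ * γ ^ 2 / α₁))
      (Real.sqrt (μ / β) + Real.sqrt (μ * γ ^ 2 / α₁)))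
    (N : ℕ) (L h : ℝ) (hL : 0 < L) (hh : h = L / (N + 1))
    (hδpos : 0 < δ)
    (hδ : δ < 1 / (2 * L) * min (min (1 / η) (2 * k₁ * α₁ / (α₁ * ρ + k₁ ^ 2)))
      (4 * k₂ * β * α₁ / (2 * α₁ * β * μ + (α + γ ^ 2 * β) * k₂ ^ 2)))
    (u1 u2 w1 w2 : ℝ → ℕ → ℝ)
    (hode1 : ∀ t ≥ (0 : ℝ), ∀ j ≤ N,
      HasDerivAt (fun s => gridMid (u1 s) j) (gridDx h (w1 t) j) t)
    (hode2 : ∀ t ≥ (0 : ℝ), ∀ j ≤ N,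
      HasDerivAt (fun s => gridMid (u2 s) j) (gridDx h (w2 t) j) t)
    (hode3 : ∀ t ≥ (0 : ℝ), ∀ j ≤ N,
      HasDerivAt (fun s => gridMid (w1 s) j)
        ((α * gridDx h (u1 t) j - γ * β * gridDx h (u2 t) j) / ρ) t)
    (hode4 : ∀ t ≥ (0 : ℝ), ∀ j ≤ N,
      HasDerivAt (fun s => gridMid (w2 s) j)
        ((β * gridDx h (u2 t) j - γ * β * gridDx h (u1 t) j) / μ) t)
    (hbc0 : ∀ t ≥ (0 : ℝ), w1 t 0 = 0 ∧ w2 t 0 = 0)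
    (hbcL1 : ∀ t ≥ (0 : ℝ),
      α * u1 t (N + 1) - γ * β * u2 t (N + 1) = -(k₁ * w1 t (N + 1)))
    (hbcL2 : ∀ t ≥ (0 : ℝ),
      β * u2 t (N + 1) - γ * β * u1 t (N + 1) = -(k₂ * w2 t (N + 1))) :
    ∀ t ≥ (0 : ℝ),
      discEnergy ρ μ β γ α₁ h N (u1 t) (u2 t) (w1 t) (w2 t) ≤
        (1 + δ * L * η) / (1 - δ * L * η) * Real.exp (-δ * (1 - δ * L * η) * t) *
          discEnergy ρ μ β γ α₁ h N (u1 0) (u2 0) (w1 0) (w2 0) :=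
  stmt_11_general ρ μ α β γ α₁ η k₁ k₂ δ hρ hμ hα hβ hα₁def hα₁ hη N L h hL hh hδpos hδ u1 u2 w1 w2
    hode1 hode2 hode3 hode4 hbc0 hbcL1 hbcL2

end
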